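/- arXiv:2404.09902 — 2 statements merged into one kernel-verified Lean document; each statement's English description precedes it below -/
import Mathlib

section
/- For every odd prime power q, there exists a special spread in PG(3,q): a partition S of the point set of PG(3,q) into lines that are hyperbolic with respect to a given symplectic polarity ζ, such that for each l ∈ S the orthogonal line l^ζ also belongs to S. -/
open Submodule Module

namespace Stmt14Aux

variable {F : Type*} [Field F]

/-- standard symplectic form on F^4 -/
noncomputable def sB : LinearMap.BilinForm F (Fin 4 → F) :=
  LinearMap.mk₂ F (fun u v => u 1 * v 0 - u 0 * v 1 + u 3 * v 2 - u 2 * v 3)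
    (by intros; simp; ring) (by intros; simp; ring)
    (by intros; simp; ring) (by intros; simp; ring)

@[simp] lemma sB_apply (u v : Fin 4 → F) :
    sB u v = u 1 * v 0 - u 0 * v 1 + u 3 * v 2 - u 2 * v 3 := rfl

/-- "multiplication by √δ", twisted by sign ε on the second K-coordinate -/
def Mm (δ ε : F) (u : Fin 4 → F) : Fin 4 → F :=
  ![δ * u 1, u 0, ε * (δ * u 3), ε * u 2]

@[simp] lemma Mm0 (δ ε : F) (u : Fin 4 → F) : Mm δ ε u 0 = δ * u 1 := rfl
@[simp] lemma Mm1 (δ ε : F) (u : Fin 4 → F) : Mm δ ε u 1 = u 0 := rfl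
@[simp] lemma Mm2 (δ ε : F) (u : Fin 4 → F) : Mm δ ε u 2 = ε * (δ * u 3) := rfl
@[simp] lemma Mm3 (δ ε : F) (u : Fin 4 → F) : Mm δ ε u 3 = ε * u 2 := rfl

/-- the quadratic form N(u₁) + N(u₂) -/
def Qf (δ : F) (u : Fin 4 → F) : F :=
  u 0 ^ 2 - δ * u 1 ^ 2 + u 2 ^ 2 - δ * u 3 ^ 2

noncomputable def eps (δ : F) (u : Fin 4 → F) : F :=
  letI := Classical.dec (Qf δ u = 0); if Qf δ u = 0 then -1 else 1

lemma eps_mem (δ : F) (u : Fin 4 → F) : eps δ u = 1 ∨ eps δ u = -1 := by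
  unfold eps; split <;> simp

/-- the line of the special spread through u -/
noncomputable def line (δ : F) (u : Fin 4 → F) : Submodule F (Fin 4 → F) :=
  span F {u, Mm δ (eps δ u) u}

/-- the special spread -/
noncomputable def S0 (δ : F) : Set (Submodule F (Fin 4 → F)) :=
  {l | ∃ u, u ≠ 0 ∧ l = line δ u}

section delta
variable {δ : F} (hδ : ¬ IsSquare δ)

include hδ

lemma aniso {a b : F} (h : a ^ 2 - δ * b ^ 2 = 0) : a = 0 ∧ b = 0 := by
  rcases eq_or_ne b 0 with hb | hb
  · subst hb; constructor
    · have : a ^ 2 = 0 := by linear_combination h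
      exact pow_eq_zero_iff (n := 2) (by norm_num) |>.mp this
    · rfl
  · exfalso
    exact hδ ⟨a / b, by field_simp; linear_combination -h⟩

lemma det_ne {a b : F} (h : ¬ (a = 0 ∧ b = 0)) : a ^ 2 - δ * b ^ 2 ≠ 0 :=
  fun hc => h (aniso hδ hc)

lemma delta_ne_zero : δ ≠ 0 := fun h => hδ ⟨0, by simp [h]⟩

end delta

lemma ne_zero_iff_comp {u : Fin 4 → F} :
    u ≠ 0 ↔ ¬ (u 0 = 0 ∧ u 1 = 0 ∧ u 2 = 0 ∧ u 3 = 0) := by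
  constructor
  · intro h hc
    exact h (funext fun i => by fin_cases i <;> simp [hc.1, hc.2.1, hc.2.2.1, hc.2.2.2])
  · intro h hc; subst hc; simp at h

section eps
variable {δ ε : F} (hε : ε = 1 ∨ ε = -1)

include hε

lemma Mm_Mm (u : Fin 4 → F) : Mm δ ε (Mm δ ε u) = δ • u := by
  rcases hε with h | h <;> subst h <;> funext i <;> fin_cases i <;>
    simp [Mm] <;> ring

lemma Mm_comb (a b : F) (u : Fin 4 → F) :
    Mm δ ε (a • u + b • Mm δ ε u) = (b * δ) • u + a • Mm δ ε u := by
  rcases hε with h | h <;> subst h <;> funext i <;> fin_cases i <;>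
    simp [Mm] <;> ring

lemma Qf_comb (a b : F) (u : Fin 4 → F) :
    Qf δ (a • u + b • Mm δ ε u) = (a ^ 2 - δ * b ^ 2) * Qf δ u := by
  rcases hε with h | h <;> subst h <;> simp [Qf, Mm] <;> ring

lemma Mm_indep (hδ : ¬ IsSquare δ) {u : Fin 4 → F} (hu : u ≠ 0) :
    LinearIndependent F ![u, Mm δ ε u] := by
  rw [LinearIndependent.pair_iff]
  intro s t hst
  by_contra hc
  have hd : s ^ 2 - δ * t ^ 2 ≠ 0 := det_ne hδ (by tauto)
  apply hu
  have h0 := congrFun hst 0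
  have h1 := congrFun hst 1
  have h2 := congrFun hst 2
  have h3 := congrFun hst 3
  simp [Mm] at h0 h1 h2 h3
  rcases hε with h | h <;> subst h <;>
  · funext i; fin_cases i <;> simp <;>
    · apply (mul_left_cancel₀ hd); rw [mul_zero]
      first
      | linear_combination s * h0 - δ * t * h1
      | linear_combination s * h1 - t * h0
      | linear_combination s * h2 - δ * t * h3
      | linear_combination s * h2 + δ * t * h3
      | linear_combination s * h3 - t * h2
      | linear_combination s * h3 + t * h2
end eps

end Stmt14Aux

namespace Stmt14Aux
variable {F : Type*} [Field F]

lemma span_pair_comm_range (u v : Fin 4 → F) :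
    ({u, v} : Set (Fin 4 → F)) = Set.range ![u, v] := by
  ext x; simp [Matrix.range_cons]; tauto

lemma finrank_span_pair {u v : Fin 4 → F} (h : LinearIndependent F ![u, v]) :
    finrank F (span F ({u, v} : Set (Fin 4 → F))) = 2 := by
  rw [span_pair_comm_range, finrank_span_eq_card h]; simp

lemma finrank_line {δ : F} (hδ : ¬ IsSquare δ) {u : Fin 4 → F} (hu : u ≠ 0) :
    finrank F (line δ u) = 2 :=
  finrank_span_pair (Mm_indep (eps_mem δ u) hδ hu)

lemma mem_line_self (δ : F) (u : Fin 4 → F) : u ∈ line δ u :=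
  subset_span (Set.mem_insert _ _)

lemma Mm_mem_line (δ : F) (u : Fin 4 → F) : Mm δ (eps δ u) u ∈ line δ u :=
  subset_span (Set.mem_insert_of_mem _ rfl)

lemma eps_eq_of_ne {δ : F} {u : Fin 4 → F} (h : Qf δ u ≠ 0) : eps δ u = 1 := by
  unfold eps; split <;> first | rfl | exact absurd (by assumption) h

lemma eps_eq_of_eq {δ : F} {u : Fin 4 → F} (h : Qf δ u = 0) : eps δ u = -1 := by
  unfold eps; split <;> first | rfl | exact absurd h (by assumption)

/-- key well-definedness: a nonzero point of a line spans the same line -/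
lemma line_eq {δ : F} (hδ : ¬ IsSquare δ) {u v : Fin 4 → F} (hu : u ≠ 0)
    (hv : v ∈ line δ u) (hv0 : v ≠ 0) : line δ v = line δ u := by
  set ε := eps δ u with hepsu
  have hε := eps_mem δ u
  obtain ⟨a, b, hab⟩ := mem_span_pair.1 hv
  have hab0 : ¬ (a = 0 ∧ b = 0) := by
    rintro ⟨rfl, rfl⟩; apply hv0; rw [← hab]; simp
  have hd : a ^ 2 - δ * b ^ 2 ≠ 0 := det_ne hδ hab0
  have hQv : Qf δ v = (a ^ 2 - δ * b ^ 2) * Qf δ u := by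
    rw [← hab]; exact Qf_comb hε a b u
  have hepsv : eps δ v = ε := by
    rcases eq_or_ne (Qf δ u) 0 with h | h
    · rw [eps_eq_of_eq (by rw [hQv, h, mul_zero]), hepsu, eps_eq_of_eq h]
    · rw [eps_eq_of_ne (by rw [hQv]; exact mul_ne_zero hd h), hepsu, eps_eq_of_ne h]
  have hMv : Mm δ ε v = (b * δ) • u + a • Mm δ ε u := by
    rw [← hab]; exact Mm_comb hε a b u
  unfold line
  rw [hepsv, ← hepsu]
  apply le_antisymm
  · rw [span_le]
    rintro x (rfl | rfl)
    · exact hv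
    · rw [hMv]
      exact add_mem (smul_mem _ _ (mem_line_self δ u)) (smul_mem _ _ (Mm_mem_line δ u))
  · rw [span_le]
    rintro x (rfl | rfl)
    · rw [SetLike.mem_coe, mem_span_pair]
      refine ⟨(a ^ 2 - δ * b ^ 2)⁻¹ * a, (a ^ 2 - δ * b ^ 2)⁻¹ * (-b), ?_⟩
      rw [hMv, ← hab]
      match_scalars <;> field_simp <;> ring
    · rw [SetLike.mem_coe, mem_span_pair]
      refine ⟨(a ^ 2 - δ * b ^ 2)⁻¹ * (-(δ * b)), (a ^ 2 - δ * b ^ 2)⁻¹ * a, ?_⟩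
      rw [hMv, ← hab]
      match_scalars <;> field_simp <;> ring

end Stmt14Aux

namespace Stmt14Aux
variable {F : Type*} [Field F]

lemma sB_alt : (sB : LinearMap.BilinForm F (Fin 4 → F)).IsAlt := fun u => by
  simp; ring

lemma sB_refl : (sB : LinearMap.BilinForm F (Fin 4 → F)).IsRefl :=
  LinearMap.IsAlt.isRefl sB_alt

lemma sB_nondeg : (sB : LinearMap.BilinForm F (Fin 4 → F)).Nondegenerate := by
  refine (LinearMap.IsRefl.nondegenerate_iff_separatingLeft
    (B := (sB : LinearMap.BilinForm F (Fin 4 → F))) sB_refl).2 ?_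
  intro m h
  have h0 := h (Pi.single 0 1)
  have h1 := h (Pi.single 1 1)
  have h2 := h (Pi.single 2 1)
  have h3 := h (Pi.single 3 1)
  simp [Pi.single_apply] at h0 h1 h2 h3
  funext i; fin_cases i <;>
    simp only [Pi.zero_apply] <;> first | exact h0 | exact h1 | exact h2 | exact h3

lemma mem_orth_span_pair_iff {x y m : Fin 4 → F} :
    m ∈ (sB : LinearMap.BilinForm F (Fin 4 → F)).orthogonal (span F {x, y}) ↔
      sB x m = 0 ∧ sB y m = 0 := by
  rw [LinearMap.BilinForm.mem_orthogonal_iff]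
  constructor
  · intro h
    exact ⟨h x (subset_span (Set.mem_insert _ _)),
      h y (subset_span (Set.mem_insert_of_mem _ rfl))⟩
  · rintro ⟨h1, h2⟩ n hn
    obtain ⟨a, b, rfl⟩ := mem_span_pair.1 hn
    show sB _ m = 0
    rw [map_add, LinearMap.add_apply, map_smul, map_smul, LinearMap.smul_apply,
      LinearMap.smul_apply, h1, h2]
    simp

lemma orth_eq_line {δ : F} (hδ : ¬ IsSquare δ) {u w : Fin 4 → F} (hu : u ≠ 0) (hw : w ≠ 0)
    (h1 : sB u w = 0) (h2 : sB (Mm δ (eps δ u) u) w = 0)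
    (h3 : sB u (Mm δ (eps δ w) w) = 0)
    (h4 : sB (Mm δ (eps δ u) u) (Mm δ (eps δ w) w) = 0) :
    (sB : LinearMap.BilinForm F (Fin 4 → F)).orthogonal (line δ u) = line δ w := by
  have hle : line δ w ≤ (sB : LinearMap.BilinForm F (Fin 4 → F)).orthogonal (line δ u) := by
    show span F _ ≤ _
    rw [span_le]
    rintro x (rfl | rfl) <;> rw [SetLike.mem_coe] <;>
      exact mem_orth_span_pair_iff.2 (by constructor <;> assumption)
  refine (Submodule.eq_of_le_of_finrank_eq hle ?_).symm
  rw [finrank_line hδ hw,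
    LinearMap.BilinForm.finrank_orthogonal sB_nondeg (line δ u),
    finrank_line hδ hu]
  simp [Module.finrank_fin_fun]

def Tm (u : Fin 4 → F) : Fin 4 → F := ![-(u 2), u 3, u 0, -(u 1)]

@[simp] lemma Tm0 (u : Fin 4 → F) : Tm u 0 = -(u 2) := rfl
@[simp] lemma Tm1 (u : Fin 4 → F) : Tm u 1 = u 3 := rfl
@[simp] lemma Tm2 (u : Fin 4 → F) : Tm u 2 = u 0 := rfl
@[simp] lemma Tm3 (u : Fin 4 → F) : Tm u 3 = -(u 1) := rfl

lemma orth_line {δ : F} (hδ : ¬ IsSquare δ) {u : Fin 4 → F} (hu : u ≠ 0) :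
    (sB : LinearMap.BilinForm F (Fin 4 → F)).orthogonal (line δ u) ∈ S0 δ := by
  rcases eq_or_ne (Qf δ u) 0 with hQ | hQ
  · -- totally isotropic case for the quadric: w = J u
    have hQ' : u 0 ^ 2 - δ * u 1 ^ 2 + u 2 ^ 2 - δ * u 3 ^ 2 = 0 := hQ
    have hδ0 : δ ≠ 0 := delta_ne_zero hδ
    have hw : Mm δ 1 u ≠ 0 := by
      rw [ne_zero_iff_comp]
      rintro ⟨c0, c1, c2, c3⟩
      simp [Mm, hδ0] at c0 c1 c2 c3
      exact (ne_zero_iff_comp.1 hu) ⟨c1, c0, c3, c2⟩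
    have hQw : Qf δ (Mm δ 1 u) = 0 := by
      have h : Qf δ (Mm δ 1 u) = -δ * Qf δ u := by simp [Qf, Mm]; ring
      rw [h, hQ, mul_zero]
    have heu := eps_eq_of_eq hQ
    have hew := eps_eq_of_eq hQw
    refine ⟨Mm δ 1 u, hw, orth_eq_line hδ hu hw ?_ ?_ ?_ ?_⟩ <;>
      (try rw [heu]) <;> (try rw [hew])
    all_goals
      simp only [sB_apply, Mm0, Mm1, Mm2, Mm3]
      first
      | ring1
      | linear_combination -hQ'
      | linear_combination δ * hQ'
  · -- anisotropic case: w = τ u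
    have hw : Tm u ≠ 0 := by
      rw [ne_zero_iff_comp]
      rintro ⟨c0, c1, c2, c3⟩
      simp [Tm] at c0 c1 c2 c3
      exact (ne_zero_iff_comp.1 hu) ⟨c2, c3, c0, c1⟩
    have hQw : Qf δ (Tm u) ≠ 0 := by
      have h : Qf δ (Tm u) = Qf δ u := by simp [Qf]; ring
      rw [h]; exact hQ
    have heu := eps_eq_of_ne hQ
    have hew := eps_eq_of_ne hQw
    refine ⟨Tm u, hw, orth_eq_line hδ hu hw ?_ ?_ ?_ ?_⟩ <;>
      (try rw [heu]) <;> (try rw [hew])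
    all_goals
      simp only [sB_apply, Mm0, Mm1, Mm2, Mm3, Tm0, Tm1, Tm2, Tm3]
      ring

end Stmt14Aux

namespace Stmt14Aux
variable {F : Type*} [Field F]

lemma line_not_isotropic {δ : F} (hδ : ¬ IsSquare δ) (h2 : (2 : F) ≠ 0)
    {u : Fin 4 → F} (hu : u ≠ 0) :
    ¬ ∀ x ∈ line δ u, ∀ y ∈ line δ u, sB x y = 0 := by
  intro h
  have key := h u (mem_line_self δ u) (Mm δ (eps δ u) u) (Mm_mem_line δ u)
  rcases eq_or_ne (Qf δ u) 0 with hQ | hQ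
  · rw [eps_eq_of_eq hQ] at key
    have hQ' : u 0 ^ 2 - δ * u 1 ^ 2 + u 2 ^ 2 - δ * u 3 ^ 2 = 0 := hQ
    simp only [sB_apply, Mm0, Mm1, Mm2, Mm3] at key
    have h23 : u 2 ^ 2 - δ * u 3 ^ 2 = 0 := by
      have h2' : (2 : F) * (u 2 ^ 2 - δ * u 3 ^ 2) = 0 := by linear_combination key + hQ'
      rcases mul_eq_zero.1 h2' with h | h
      · exact absurd h h2
      · exact h
    obtain ⟨c2, c3⟩ := aniso hδ h23
    have h01 : u 0 ^ 2 - δ * u 1 ^ 2 = 0 := by rw [c2, c3] at hQ'; linear_combination hQ'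
    obtain ⟨c0, c1⟩ := aniso hδ h01
    exact ne_zero_iff_comp.1 hu ⟨c0, c1, c2, c3⟩
  · rw [eps_eq_of_ne hQ] at key
    apply hQ
    simp only [sB_apply, Mm0, Mm1, Mm2, Mm3] at key
    show u 0 ^ 2 - δ * u 1 ^ 2 + u 2 ^ 2 - δ * u 3 ^ 2 = 0
    linear_combination -key

lemma S0_cover {δ : F} (hδ : ¬ IsSquare δ) {v : Fin 4 → F} (hv : v ≠ 0) :
    ∃! l, l ∈ S0 δ ∧ v ∈ l := by
  refine ⟨line δ v, ⟨⟨v, hv, rfl⟩, mem_line_self δ v⟩, ?_⟩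
  rintro l ⟨⟨u, hu, rfl⟩, hvl⟩
  exact (line_eq hδ hu hvl hv).symm

end Stmt14Aux


namespace Stmt14Aux
variable {F : Type*} [Field F]

lemma exists_symplectic_family (B : LinearMap.BilinForm F (Fin 4 → F))
    (halt : ∀ v, B v v = 0) (hnd : ∀ v, (∀ w, B v w = 0) → v = 0) :
    ∃ g : Fin 4 → (Fin 4 → F), LinearIndependent F g ∧
      B (g 0) (g 1) = -1 ∧ B (g 2) (g 3) = -1 ∧
      B (g 0) (g 2) = 0 ∧ B (g 0) (g 3) = 0 ∧
      B (g 1) (g 2) = 0 ∧ B (g 1) (g 3) = 0 := by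
  have hskew : ∀ u v, B v u = - B u v := by
    intro u v
    have h := halt (u + v)
    simp only [map_add, LinearMap.add_apply] at h
    linear_combination h - halt u - halt v
  -- g0 and g1
  set g0 : Fin 4 → F := Pi.single 0 1 with hg0def
  have hg0ne : g0 ≠ 0 := by
    intro h; have := congrFun h 0; rw [hg0def] at this; simp at this
  obtain ⟨w0, hw0⟩ : ∃ w, B g0 w ≠ 0 := by
    by_contra hc; push_neg at hc; exact hg0ne (hnd g0 hc)
  set g1 : Fin 4 → F := -((B g0 w0)⁻¹ • w0) with hg1def
  have hB01 : B g0 g1 = -1 := by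
    rw [hg1def, map_neg, map_smul, smul_eq_mul, inv_mul_cancel₀ hw0]
  have hB10 : B g1 g0 = 1 := by rw [hskew, hB01]; ring
  -- the projection onto the orthogonal complement of {g0, g1}
  set P : (Fin 4 → F) → (Fin 4 → F) :=
    fun v => v + (B g0 v) • g1 - (B g1 v) • g0 with hPdef
  have hP0 : ∀ v, B g0 (P v) = 0 := by
    intro v
    simp only [hPdef, map_add, map_sub, map_smul, smul_eq_mul]
    rw [hB01, halt g0]; ring
  have hP1 : ∀ v, B g1 (P v) = 0 := by
    intro v
    simp only [hPdef, map_add, map_sub, map_smul, smul_eq_mul]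
    rw [hB10, halt g1]; ring
  -- find a nonzero vector in the orthogonal complement
  obtain ⟨i, hi⟩ : ∃ i : Fin 4, P (Pi.basisFun F (Fin 4) i) ≠ 0 := by
    by_contra hc; push_neg at hc
    have hsub : Set.range ⇑(Pi.basisFun F (Fin 4)) ⊆
        (span F {g0, g1} : Submodule F (Fin 4 → F)) := by
      rintro x ⟨i, rfl⟩
      have h : Pi.basisFun F (Fin 4) i + (B g0 (Pi.basisFun F (Fin 4) i)) • g1
          - (B g1 (Pi.basisFun F (Fin 4) i)) • g0 = 0 := hc i
      rw [SetLike.mem_coe, mem_span_pair]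
      refine ⟨B g1 (Pi.basisFun F (Fin 4) i), -(B g0 (Pi.basisFun F (Fin 4) i)), ?_⟩
      rw [eq_comm, ← sub_eq_zero]
      calc Pi.basisFun F (Fin 4) i - ((B g1 (Pi.basisFun F (Fin 4) i)) • g0
            + (-(B g0 (Pi.basisFun F (Fin 4) i))) • g1)
          = Pi.basisFun F (Fin 4) i + (B g0 (Pi.basisFun F (Fin 4) i)) • g1
              - (B g1 (Pi.basisFun F (Fin 4) i)) • g0 := by module
        _ = 0 := h
    have htop : (⊤ : Submodule F (Fin 4 → F)) ≤ span F {g0, g1} := by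
      rw [← (Pi.basisFun F (Fin 4)).span_eq]
      exact span_le.2 hsub
    have h42 : (4 : ℕ) ≤ 2 := by
      calc (4 : ℕ) = finrank F (Fin 4 → F) := (Module.finrank_fin_fun F).symm
        _ = finrank F (⊤ : Submodule F (Fin 4 → F)) := finrank_top F _ |>.symm
        _ ≤ finrank F (span F ({g0, g1} : Set (Fin 4 → F))) :=
            Submodule.finrank_mono htop
        _ ≤ 2 := by
            rw [span_pair_comm_range]
            calc finrank F (span F (Set.range ![g0, g1]))
                ≤ Fintype.card (Fin 2) := finrank_range_le_card ![g0, g1]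
              _ = 2 := by simp
    omega
  set g2 : Fin 4 → F := P (Pi.basisFun F (Fin 4) i) with hg2def
  have hB02 : B g0 g2 = 0 := hP0 _
  have hB12 : B g1 g2 = 0 := hP1 _
  have hB20 : B g2 g0 = 0 := by rw [hskew, hB02, neg_zero]
  have hB21 : B g2 g1 = 0 := by rw [hskew, hB12, neg_zero]
  obtain ⟨w2, hw2⟩ : ∃ w, B g2 w ≠ 0 := by
    by_contra hc; push_neg at hc; exact hi (hnd g2 hc)
  have hw2' : B g2 (P w2) ≠ 0 := by
    simp only [hPdef, map_add, map_sub, map_smul, smul_eq_mul]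
    rw [hB20, hB21]
    simpa using hw2
  set g3 : Fin 4 → F := -((B g2 (P w2))⁻¹ • P w2) with hg3def
  have hB23 : B g2 g3 = -1 := by
    rw [hg3def, map_neg, map_smul, smul_eq_mul, inv_mul_cancel₀ hw2']
  have hB03 : B g0 g3 = 0 := by
    rw [hg3def, map_neg, map_smul, hP0, smul_zero, neg_zero]
  have hB13 : B g1 g3 = 0 := by
    rw [hg3def, map_neg, map_smul, hP1, smul_zero, neg_zero]
  -- linear independence
  have h32 : B g3 g2 = 1 := by rw [hskew, hB23]; ring
  have h10 : B g1 g0 = 1 := hB10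
  have hli : LinearIndependent F ![g0, g1, g2, g3] := by
    rw [Fintype.linearIndependent_iff]
    intro c hc
    rw [Fin.sum_univ_four] at hc
    simp only [Matrix.cons_val_zero, Matrix.cons_val_one, Matrix.head_cons,
      Matrix.cons_val_two, Matrix.tail_cons, Matrix.cons_val_three] at hc
    have e1 := congrArg (fun v => B v g1) hc
    have e0 := congrArg (fun v => B v g0) hc
    have e3 := congrArg (fun v => B v g3) hc
    have e2 := congrArg (fun v => B v g2) hc
    simp only [map_add, map_smul, LinearMap.add_apply, LinearMap.smul_apply,
      smul_eq_mul, LinearMap.zero_apply, map_zero] at e0 e1 e2 e3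
    have hB30 : B g3 g0 = 0 := by rw [hskew, hB03, neg_zero]
    have hB31 : B g3 g1 = 0 := by rw [hskew, hB13, neg_zero]
    simp only [halt g0, halt g1, halt g2, halt g3, hB01, hB10, hB21, hB31,
      hB02, hB03, hB12, hB13, hB23, h32, hB30, hB20, mul_zero, mul_one,
      mul_neg_one, zero_add, add_zero, neg_add_eq_zero, neg_eq_zero] at e0 e1 e2 e3
    intro j
    fin_cases j
    exacts [e1, e0, e3, e2]
  refine ⟨![g0, g1, g2, g3], hli, ?_, ?_, ?_, ?_, ?_, ?_⟩ <;>
    simp only [Matrix.cons_val_zero, Matrix.cons_val_one, Matrix.head_cons,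
      Matrix.cons_val_two, Matrix.tail_cons, Matrix.cons_val_three] <;>
    assumption

end Stmt14Aux


open Stmt14Aux Submodule Module in
/-- for every odd prime power q there exists a special spread in
PG(3,q): a partition of the point set into hyperbolic lines (with respect to the
symplectic polarity induced by the alternating form B) closed under the polarity. -/
theorem stmt14 {F : Type*} [Field F] [Fintype F] (q : ℕ)
    (hq : Fintype.card F = q) (hodd : Odd q)
    (B : LinearMap.BilinForm F (Fin 4 → F))
    (halt : ∀ v, B v v = 0)
    (hnd : ∀ v, (∀ w, B v w = 0) → v = 0) :
    ∃ S : Set (Submodule F (Fin 4 → F)),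
      (∀ l ∈ S, Module.finrank F l = 2) ∧
      (∀ l ∈ S, ¬ ∀ u ∈ l, ∀ v ∈ l, B u v = 0) ∧
      (∀ v : Fin 4 → F, v ≠ 0 → ∃! l, l ∈ S ∧ v ∈ l) ∧
      (∀ l ∈ S, B.orthogonal l ∈ S) := by
  classical
  -- the characteristic is odd
  have hchar : ringChar F ≠ 2 := by
    intro h
    have he := FiniteField.even_card_of_char_two h
    rw [hq] at he
    rw [Nat.odd_iff] at hodd
    omega
  have h2 : (2 : F) ≠ 0 := by
    intro h
    have hd : ringChar F ∣ 2 := by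
      have h' : ((2 : ℕ) : F) = 0 := by exact_mod_cast h
      exact (CharP.cast_eq_zero_iff F (ringChar F) 2).1 h'
    have h1 : ringChar F ≠ 1 := CharP.ringChar_ne_one
    have hle : ringChar F ≤ 2 := Nat.le_of_dvd (by norm_num) hd
    have h0 : ringChar F ≠ 0 := by
      intro h0; rw [h0] at hd; simp at hd
    exact hchar (by omega)
  obtain ⟨δ, hδ⟩ := FiniteField.exists_nonsquare hchar
  -- a symplectic basis for B
  obtain ⟨g, hli, t01, t23, t02, t03, t12, t13⟩ := exists_symplectic_family B halt hnd
  have hskew : ∀ u v, B v u = - B u v := by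
    intro u v
    have h := halt (u + v)
    simp only [map_add, LinearMap.add_apply] at h
    linear_combination h - halt u - halt v
  have h10 : B (g 1) (g 0) = 1 := by rw [hskew, t01]; ring
  have h32 : B (g 3) (g 2) = 1 := by rw [hskew, t23]; ring
  have h20 : B (g 2) (g 0) = 0 := by rw [hskew, t02]; ring
  have h30 : B (g 3) (g 0) = 0 := by rw [hskew, t03]; ring
  have h21 : B (g 2) (g 1) = 0 := by rw [hskew, t12]; ring
  have h31 : B (g 3) (g 1) = 0 := by rw [hskew, t13]; ring
  have hcard : Fintype.card (Fin 4) = finrank F (Fin 4 → F) := by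
    simp
  set b : Basis (Fin 4) F (Fin 4 → F) :=
    basisOfLinearIndependentOfCardEqFinrank hli hcard with hbdef
  have hb : ∀ i, b i = g i := fun i => by
    rw [hbdef, coe_basisOfLinearIndependentOfCardEqFinrank]
  set φ : (Fin 4 → F) ≃ₗ[F] (Fin 4 → F) :=
    (Pi.basisFun F (Fin 4)).equiv b (Equiv.refl _) with hphidef
  have hφe : ∀ i, φ (Pi.basisFun F (Fin 4) i) = g i := fun i => by
    rw [hphidef, Basis.equiv_apply, Equiv.refl_apply, hb]
  have hcomp : ∀ x y, B (φ x) (φ y) = sB x y := by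
    have key : B.compl₁₂ (φ : (Fin 4 → F) →ₗ[F] (Fin 4 → F))
          (φ : (Fin 4 → F) →ₗ[F] (Fin 4 → F))
        = (sB : LinearMap.BilinForm F (Fin 4 → F)) := by
      apply LinearMap.ext_basis (Pi.basisFun F (Fin 4)) (Pi.basisFun F (Fin 4))
      intro i j
      rw [LinearMap.compl₁₂_apply]
      have hc : B (φ (Pi.basisFun F (Fin 4) i)) (φ (Pi.basisFun F (Fin 4) j))
          = B (g i) (g j) := by rw [hφe, hφe]
      rw [LinearEquiv.coe_coe, hc]
      fin_cases i <;> fin_cases j <;>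
        first
        | exact (halt (g 0)).trans (by norm_num [Pi.single_apply, Fin.ext_iff, show ((0:Fin 4):ℕ) = 0 from rfl, show ((1:Fin 4):ℕ) = 1 from rfl, show ((2:Fin 4):ℕ) = 2 from rfl, show ((3:Fin 4):ℕ) = 3 from rfl])
        | exact (halt (g 1)).trans (by norm_num [Pi.single_apply, Fin.ext_iff, show ((0:Fin 4):ℕ) = 0 from rfl, show ((1:Fin 4):ℕ) = 1 from rfl, show ((2:Fin 4):ℕ) = 2 from rfl, show ((3:Fin 4):ℕ) = 3 from rfl])
        | exact (halt (g 2)).trans (by norm_num [Pi.single_apply, Fin.ext_iff, show ((0:Fin 4):ℕ) = 0 from rfl, show ((1:Fin 4):ℕ) = 1 from rfl, show ((2:Fin 4):ℕ) = 2 from rfl, show ((3:Fin 4):ℕ) = 3 from rfl])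
        | exact (halt (g 3)).trans (by norm_num [Pi.single_apply, Fin.ext_iff, show ((0:Fin 4):ℕ) = 0 from rfl, show ((1:Fin 4):ℕ) = 1 from rfl, show ((2:Fin 4):ℕ) = 2 from rfl, show ((3:Fin 4):ℕ) = 3 from rfl])
        | exact t01.trans (by norm_num [Pi.single_apply, Fin.ext_iff, show ((0:Fin 4):ℕ) = 0 from rfl, show ((1:Fin 4):ℕ) = 1 from rfl, show ((2:Fin 4):ℕ) = 2 from rfl, show ((3:Fin 4):ℕ) = 3 from rfl])
        | exact t23.trans (by norm_num [Pi.single_apply, Fin.ext_iff, show ((0:Fin 4):ℕ) = 0 from rfl, show ((1:Fin 4):ℕ) = 1 from rfl, show ((2:Fin 4):ℕ) = 2 from rfl, show ((3:Fin 4):ℕ) = 3 from rfl])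
        | exact t02.trans (by norm_num [Pi.single_apply, Fin.ext_iff, show ((0:Fin 4):ℕ) = 0 from rfl, show ((1:Fin 4):ℕ) = 1 from rfl, show ((2:Fin 4):ℕ) = 2 from rfl, show ((3:Fin 4):ℕ) = 3 from rfl])
        | exact t03.trans (by norm_num [Pi.single_apply, Fin.ext_iff, show ((0:Fin 4):ℕ) = 0 from rfl, show ((1:Fin 4):ℕ) = 1 from rfl, show ((2:Fin 4):ℕ) = 2 from rfl, show ((3:Fin 4):ℕ) = 3 from rfl])
        | exact t12.trans (by norm_num [Pi.single_apply, Fin.ext_iff, show ((0:Fin 4):ℕ) = 0 from rfl, show ((1:Fin 4):ℕ) = 1 from rfl, show ((2:Fin 4):ℕ) = 2 from rfl, show ((3:Fin 4):ℕ) = 3 from rfl])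
        | exact t13.trans (by norm_num [Pi.single_apply, Fin.ext_iff, show ((0:Fin 4):ℕ) = 0 from rfl, show ((1:Fin 4):ℕ) = 1 from rfl, show ((2:Fin 4):ℕ) = 2 from rfl, show ((3:Fin 4):ℕ) = 3 from rfl])
        | exact h10.trans (by norm_num [Pi.single_apply, Fin.ext_iff, show ((0:Fin 4):ℕ) = 0 from rfl, show ((1:Fin 4):ℕ) = 1 from rfl, show ((2:Fin 4):ℕ) = 2 from rfl, show ((3:Fin 4):ℕ) = 3 from rfl])
        | exact h32.trans (by norm_num [Pi.single_apply, Fin.ext_iff, show ((0:Fin 4):ℕ) = 0 from rfl, show ((1:Fin 4):ℕ) = 1 from rfl, show ((2:Fin 4):ℕ) = 2 from rfl, show ((3:Fin 4):ℕ) = 3 from rfl])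
        | exact h20.trans (by norm_num [Pi.single_apply, Fin.ext_iff, show ((0:Fin 4):ℕ) = 0 from rfl, show ((1:Fin 4):ℕ) = 1 from rfl, show ((2:Fin 4):ℕ) = 2 from rfl, show ((3:Fin 4):ℕ) = 3 from rfl])
        | exact h30.trans (by norm_num [Pi.single_apply, Fin.ext_iff, show ((0:Fin 4):ℕ) = 0 from rfl, show ((1:Fin 4):ℕ) = 1 from rfl, show ((2:Fin 4):ℕ) = 2 from rfl, show ((3:Fin 4):ℕ) = 3 from rfl])
        | exact h21.trans (by norm_num [Pi.single_apply, Fin.ext_iff, show ((0:Fin 4):ℕ) = 0 from rfl, show ((1:Fin 4):ℕ) = 1 from rfl, show ((2:Fin 4):ℕ) = 2 from rfl, show ((3:Fin 4):ℕ) = 3 from rfl])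
        | exact h31.trans (by norm_num [Pi.single_apply, Fin.ext_iff, show ((0:Fin 4):ℕ) = 0 from rfl, show ((1:Fin 4):ℕ) = 1 from rfl, show ((2:Fin 4):ℕ) = 2 from rfl, show ((3:Fin 4):ℕ) = 3 from rfl])
    intro x y
    have hxy : B.compl₁₂ (φ : (Fin 4 → F) →ₗ[F] (Fin 4 → F))
        (φ : (Fin 4 → F) →ₗ[F] (Fin 4 → F)) x y = sB x y := by rw [key]
    rw [LinearMap.compl₁₂_apply, LinearEquiv.coe_coe] at hxy
    exact hxy
  -- transport the special spread through φ
  refine ⟨(fun l => Submodule.map (φ : (Fin 4 → F) →ₗ[F] (Fin 4 → F)) l) '' S0 δ,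
    ?_, ?_, ?_, ?_⟩
  · rintro l ⟨l0, ⟨u, hu, rfl⟩, rfl⟩
    rw [LinearEquiv.finrank_map_eq φ]
    exact finrank_line hδ hu
  · rintro l ⟨l0, ⟨u, hu, rfl⟩, rfl⟩ h
    apply line_not_isotropic hδ h2 hu
    intro x hx y hy
    rw [← hcomp]
    exact h (φ x) (Submodule.mem_map_of_mem hx) (φ y) (Submodule.mem_map_of_mem hy)
  · intro v hv
    have hv' : φ.symm v ≠ 0 := by
      intro h; apply hv
      have := congrArg φ h
      rw [LinearEquiv.apply_symm_apply] at this
      simpa using this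
    refine ⟨Submodule.map (φ : (Fin 4 → F) →ₗ[F] (Fin 4 → F)) (line δ (φ.symm v)),
      ⟨⟨line δ (φ.symm v), ⟨φ.symm v, hv', rfl⟩, rfl⟩, ?_⟩, ?_⟩
    · rw [Submodule.mem_map_equiv]
      simpa using mem_line_self δ (φ.symm v)
    · rintro l ⟨⟨l0, ⟨u, hu, rfl⟩, rfl⟩, hvl⟩
      rw [Submodule.mem_map_equiv] at hvl
      congr 1
      exact (line_eq hδ hu hvl hv').symm
  · rintro l ⟨l0, ⟨u, hu, rfl⟩, rfl⟩
    have horth : B.orthogonal (Submodule.map (φ : (Fin 4 → F) →ₗ[F] (Fin 4 → F)) (line δ u))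
        = Submodule.map (φ : (Fin 4 → F) →ₗ[F] (Fin 4 → F))
            ((sB : LinearMap.BilinForm F (Fin 4 → F)).orthogonal (line δ u)) := by
      ext m
      rw [Submodule.mem_map_equiv, LinearMap.BilinForm.mem_orthogonal_iff,
        LinearMap.BilinForm.mem_orthogonal_iff]
      constructor
      · intro h x hx
        show sB x (φ.symm m) = 0
        rw [← hcomp x (φ.symm m), LinearEquiv.apply_symm_apply]
        exact h (φ x) (Submodule.mem_map_of_mem hx)
      · intro h n hn
        rw [Submodule.mem_map_equiv] at hn
        show B n m = 0
        have hn' : n = φ (φ.symm n) := (LinearEquiv.apply_symm_apply φ n).symm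
        have hm' : m = φ (φ.symm m) := (LinearEquiv.apply_symm_apply φ m).symm
        rw [hn', hm', hcomp]
        exact h (φ.symm n) hn
    rw [horth]
    obtain ⟨w, hw, hweq⟩ := orth_line hδ hu
    exact ⟨(sB : LinearMap.BilinForm F (Fin 4 → F)).orthogonal (line δ u), ⟨w, hw, hweq⟩, rfl⟩
end

section
/- Let q be odd and let U₁, U₂ be two distinct elements of 𝒰_q (unions of pairs of orthogonal hyperbolic lines in PG(3,q)), with corresponding hyperbolic points x₁, x₂ of the parabolic quadric Q(4,q) under the Klein/duality correspondence. Then U₁ and U₂ are not disjoint if and only if the line x₁x₂ is a tangent line to Q(4,q); and if they are not disjoint then |U₁ ∩ U₂| = 2. -/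
open Module Submodule

namespace Helpers16

set_option linter.unusedSectionVars false
set_option linter.unusedVariables false

variable {F : Type*} [Field F]

lemma rank1_exists (p : Submodule F (Fin 5 → F)) (hp : Module.finrank F p = 1) :
    ∃ v : Fin 5 → F, v ≠ 0 ∧ p = Submodule.span F {v} := by
  have hpb : p ≠ ⊥ := by
    intro h; rw [h] at hp; simp at hp
  obtain ⟨v, hv, hv0⟩ := Submodule.exists_mem_ne_zero_of_ne_bot hpb
  refine ⟨v, hv0, ?_⟩
  have hle : Submodule.span F {v} ≤ p := by
    rw [Submodule.span_singleton_le_iff_mem]; exact hv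
  have : finrank F (Submodule.span F {v}) = 1 := finrank_span_singleton hv0
  exact (Submodule.eq_of_le_of_finrank_le hle (by rw [this, hp])).symm

lemma range_pair (a b : Fin 5 → F) : Set.range ![a,b] = {a,b} := by
  simp [Matrix.range_cons, Matrix.range_empty, Set.pair_comm a b]

lemma finrank_span2 (a b : Fin 5 → F)
    (h : ∀ s t : F, s • a + t • b = 0 → s = 0 ∧ t = 0) :
    finrank F (span F ({a, b} : Set (Fin 5 → F))) = 2 := by
  have hli : LinearIndependent F ![a, b] := by
    rw [Fintype.linearIndependent_iff]
    intro g hg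
    have := h (g 0) (g 1) (by simpa [Fin.sum_univ_two] using hg)
    intro i; fin_cases i <;> simp [this.1, this.2]
  have := finrank_span_eq_card hli
  rwa [range_pair, Fintype.card_fin] at this

lemma finrank_span4 (a b c d : Fin 5 → F)
    (h : ∀ c₁ c₂ c₃ c₄ : F, c₁ • a + c₂ • b + c₃ • c + c₄ • d = 0 →
      c₁ = 0 ∧ c₂ = 0 ∧ c₃ = 0 ∧ c₄ = 0) :
    finrank F (span F ({a, b, c, d} : Set (Fin 5 → F))) = 4 := by
  have hli : LinearIndependent F ![a, b, c, d] := by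
    rw [Fintype.linearIndependent_iff]
    intro g hg
    have := h (g 0) (g 1) (g 2) (g 3) (by
      have := hg
      simpa [Fin.sum_univ_four, add_assoc] using this)
    intro i; fin_cases i <;>
      simp [this.1, this.2.1, this.2.2.1, this.2.2.2]
  have h2 := finrank_span_eq_card hli
  have hr : Set.range ![a, b, c, d] = {a, b, c, d} := by
    ext x
    simp [Matrix.range_cons, Matrix.range_empty]
    tauto
  rwa [hr, Fintype.card_fin] at h2

lemma keyA4 (B : LinearMap.BilinForm F (Fin 5 → F))
    (hnd : ∀ v, (∀ w, B v w = 0) → v = 0)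
    (m₁ m₂ m₃ m₄ z₁ z₂ : Fin 5 → F)
    (hind4 : ∀ c₁ c₂ c₃ c₄ : F, c₁ • m₁ + c₂ • m₂ + c₃ • m₃ + c₄ • m₄ = 0 →
      c₁ = 0 ∧ c₂ = 0 ∧ c₃ = 0 ∧ c₄ = 0)
    (h11 : B z₁ m₁ = 0) (h12 : B z₁ m₂ = 0) (h13 : B z₁ m₃ = 0) (h14 : B z₁ m₄ = 0)
    (h21 : B z₂ m₁ = 0) (h22 : B z₂ m₂ = 0) (h23 : B z₂ m₃ = 0) (h24 : B z₂ m₄ = 0)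
    (hz₂ : z₂ ≠ 0) : ∃ c : F, z₁ = c • z₂ := by
  set M : Submodule F (Fin 5 → F) := span F {m₁, m₂, m₃, m₄} with hMdef
  have hM : finrank F M = 4 := finrank_span4 m₁ m₂ m₃ m₄ hind4
  have hMz : ∀ z : Fin 5 → F, B z m₁ = 0 → B z m₂ = 0 → B z m₃ = 0 → B z m₄ = 0 →
      ∀ m ∈ M, B z m = 0 := by
    intro z e1 e2 e3 e4 m hm
    have : M ≤ LinearMap.ker (B z) := by
      rw [hMdef, Submodule.span_le]
      intro y hy
      simp only [Set.mem_insert_iff, Set.mem_singleton_iff] at hy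
      rcases hy with rfl | rfl | rfl | rfl <;>
        simp [LinearMap.mem_ker, e1, e2, e3, e4]
    exact this hm
  have hMtop : M ≠ ⊤ := by
    intro h
    have h5 : finrank F (Fin 5 → F) = 5 := Module.finrank_fin_fun F
    rw [h, finrank_top, h5] at hM; exact (by norm_num : (5:ℕ) ≠ 4) hM
  obtain ⟨v₅, hv₅⟩ : ∃ v₅, v₅ ∉ M := by
    by_contra h; push_neg at h
    exact hMtop (eq_top_iff.2 fun v _ => h v)
  have hNtop : M ⊔ span F {v₅} = ⊤ := by
    apply Submodule.eq_top_of_finrank_eq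
    have hlt : M < M ⊔ span F {v₅} := by
      refine lt_of_le_of_ne le_sup_left (fun h => hv₅ ?_)
      rw [h]; exact Submodule.mem_sup_right (Submodule.mem_span_singleton_self v₅)
    have h1 := Submodule.finrank_lt_finrank_of_lt hlt
    have h2 := Submodule.finrank_le (M ⊔ span F {v₅})
    rw [Module.finrank_fin_fun F]
    rw [hM] at h1
    rw [Module.finrank_fin_fun F] at h2
    omega
  have hzero : ∀ z : Fin 5 → F, (∀ m ∈ M, B z m = 0) → B z v₅ = 0 → z = 0 := by
    intro z hzM hz5
    apply hnd
    intro w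
    have hw : w ∈ M ⊔ span F {v₅} := by rw [hNtop]; trivial
    obtain ⟨m, hm, y, hy, rfl⟩ := Submodule.mem_sup.1 hw
    obtain ⟨t, rfl⟩ := Submodule.mem_span_singleton.1 hy
    simp [map_add, map_smul, hzM m hm, hz5]
  have hz25 : B z₂ v₅ ≠ 0 := by
    intro h
    exact hz₂ (hzero z₂ (hMz z₂ h21 h22 h23 h24) h)
  refine ⟨B z₁ v₅ / B z₂ v₅, ?_⟩
  have key : z₁ - (B z₁ v₅ / B z₂ v₅) • z₂ = 0 := by
    apply hzero
    · intro m hm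
      simp [map_sub, map_smul, hMz z₁ h11 h12 h13 h14 m hm, hMz z₂ h21 h22 h23 h24 m hm]
    · simp only [map_sub, map_smul, LinearMap.sub_apply, LinearMap.smul_apply, smul_eq_mul]
      field_simp
      ring
  exact sub_eq_zero.1 key

lemma two_ne_zero_of_odd_card [Fintype F] (q : ℕ) (hq : Fintype.card F = q)
    (hodd : Odd q) : (2 : F) ≠ 0 := by
  intro h20
  set p := ringChar F with hp
  have hchar : CharP F p := ringChar.charP F
  have hprime : p.Prime := CharP.char_is_prime F p
  have hdvd : p ∣ 2 := (CharP.cast_eq_zero_iff F p 2).1 (by exact_mod_cast h20)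
  have hp2 : p = 2 := (Nat.prime_dvd_prime_iff_eq hprime Nat.prime_two).1 hdvd
  obtain ⟨n, -, hcard⟩ := FiniteField.card F p
  rw [hp2] at hcard
  rw [hq] at hcard
  have : Even q := by
    rw [hcard]
    exact (Nat.even_pow' (by exact_mod_cast n.ne_zero)).2 even_two
  exact (Nat.not_even_iff_odd.2 hodd) this

lemma rank2_exists (P : Submodule F (Fin 5 → F)) (hP : Module.finrank F P = 2) :
    ∃ p₁ p₂ : Fin 5 → F, p₁ ∈ P ∧ p₂ ∈ P ∧
      ∀ s t : F, s • p₁ + t • p₂ = 0 → s = 0 ∧ t = 0 := by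
  have hPb : P ≠ ⊥ := by intro h; rw [h] at hP; simp at hP
  obtain ⟨p₁, hp₁, hp₁0⟩ := Submodule.exists_mem_ne_zero_of_ne_bot hPb
  have hns : ¬ (P ≤ span F {p₁}) := by
    intro hle
    have := Submodule.finrank_mono (M := Fin 5 → F) (s := P) (t := span F {p₁}) hle
    rw [hP, finrank_span_singleton hp₁0] at this
    omega
  obtain ⟨p₂, hp₂, hp₂n⟩ : ∃ p₂, p₂ ∈ P ∧ p₂ ∉ span F {p₁} := by
    by_contra h; push_neg at h; exact hns fun x hx => h x hx
  refine ⟨p₁, p₂, hp₁, hp₂, ?_⟩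
  intro s t hst
  by_cases ht : t = 0
  · subst ht
    simp only [zero_smul, add_zero, smul_eq_zero] at hst
    exact ⟨hst.resolve_right hp₁0, rfl⟩
  · exfalso
    apply hp₂n
    rw [Submodule.mem_span_singleton]
    refine ⟨-(s/t), ?_⟩
    have hv : t • p₂ = -(s • p₁) := by
      rwa [add_comm, add_eq_zero_iff_eq_neg] at hst
    have hts : t * -(s/t) = -s := by field_simp
    apply smul_right_injective (Fin 5 → F) ht
    show t • (-(s / t) • p₁) = t • p₂
    rw [hv, smul_smul, hts, neg_smul]

/-- pair independence from non-membership in a span -/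
lemma indep_of_not_mem_span (r u : Fin 5 → F) (hr0 : r ≠ 0)
    (husp : u ∉ span F {r}) :
    ∀ s t : F, s • r + t • u = 0 → s = 0 ∧ t = 0 := by
  intro s t hst
  by_cases ht : t = 0
  · subst ht
    simp only [zero_smul, add_zero, smul_eq_zero] at hst
    exact ⟨hst.resolve_right hr0, rfl⟩
  · exfalso
    apply husp
    rw [Submodule.mem_span_singleton]
    refine ⟨-(s/t), ?_⟩
    have hv : t • u = -(s • r) := by
      rwa [add_comm, add_eq_zero_iff_eq_neg] at hst
    have hts : t * -(s/t) = -s := by field_simp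
    apply smul_right_injective (Fin 5 → F) ht
    show t • (-(s / t) • r) = t • u
    rw [hv, smul_smul, hts, neg_smul]

lemma cross_zero (B : LinearMap.BilinForm F (Fin 5 → F))
    (hsymm : ∀ u v, B u v = B v u) (h2F : (2 : F) ≠ 0)
    (W : Submodule F (Fin 5 → F)) (hWts : ∀ v ∈ W, B v v = 0) :
    ∀ w ∈ W, ∀ w' ∈ W, B w w' = 0 := by
  intro w hw w' hw'
  have h := hWts (w + w') (W.add_mem hw hw')
  simp only [map_add, LinearMap.add_apply] at h
  rw [hWts w hw, hWts w' hw', hsymm w' w] at h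
  have h2 : (2 : F) * B w w' = 0 := by linear_combination h
  exact (mul_eq_zero.1 h2).resolve_left h2F

lemma exists_u1 (B : LinearMap.BilinForm F (Fin 5 → F))
    (hsymm : ∀ u v, B u v = B v u) (h2F : (2 : F) ≠ 0)
    (v₁ v₂ r : Fin 5 → F) (a b : F) (hb : b ≠ 0)
    (hr : r = a • v₁ + b • v₂)
    (W : Submodule F (Fin 5 → F)) (hW1 : ∀ w ∈ W, B v₁ w = 0)
    (hWrk : Module.finrank F W = 2) (hWts : ∀ v ∈ W, B v v = 0) :
    ∃ u, B u u = 0 ∧ B v₁ u = 0 ∧ B v₂ u = 0 ∧ B r u = 0 ∧ u ∉ span F {r} := by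
  have hv2 : ∀ u, B v₁ u = 0 → B r u = 0 → B v₂ u = 0 := by
    intro u h1 h2
    have he : B r u = a * B v₁ u + b * B v₂ u := by
      rw [hr]; simp [LinearMap.add_apply]
    rw [h1, h2, mul_zero, zero_add] at he
    rcases mul_eq_zero.1 he.symm with h | h
    · exact absurd h hb
    · exact h
  obtain ⟨p₁, p₂, hp₁, hp₂, hind⟩ := rank2_exists W hWrk
  have hp₁0 : p₁ ≠ 0 := by
    intro h; exact one_ne_zero (hind 1 0 (by simp [h])).1
  have hcross := cross_zero B hsymm h2F W hWts
  suffices h : ∃ u, u ∈ W ∧ B r u = 0 ∧ u ∉ span F {r} by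
    obtain ⟨u, huW, hru, husp⟩ := h
    exact ⟨u, hWts u huW, hW1 u huW, hv2 u (hW1 u huW) hru, hru, husp⟩
  by_cases hrW : r ∈ W
  · have hdisj : p₁ ∉ span F {r} ∨ p₂ ∉ span F {r} := by
      by_contra h; push_neg at h
      obtain ⟨c, hc⟩ := Submodule.mem_span_singleton.1 h.1
      obtain ⟨d, hd⟩ := Submodule.mem_span_singleton.1 h.2
      have hc0 : c ≠ 0 := fun h0 => hp₁0 (by rw [← hc, h0, zero_smul])
      have := hind d (-c) (by rw [← hc, ← hd]; module)
      exact hc0 (neg_eq_zero.1 this.2)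
    rcases hdisj with h | h
    · exact ⟨p₁, hp₁, hcross r hrW p₁ hp₁, h⟩
    · exact ⟨p₂, hp₂, hcross r hrW p₂ hp₂, h⟩
  · have hnotsp : ∀ u, u ∈ W → u ≠ 0 → u ∉ span F {r} := by
      intro u huW hu0 husp
      obtain ⟨c, hc⟩ := Submodule.mem_span_singleton.1 husp
      have hc0 : c ≠ 0 := fun h0 => hu0 (by rw [← hc, h0, zero_smul])
      apply hrW
      have : r = c⁻¹ • u := by rw [← hc, smul_smul, inv_mul_cancel₀ hc0, one_smul]
      rw [this]; exact W.smul_mem _ huW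
    by_cases h1p : B r p₁ = 0
    · exact ⟨p₁, hp₁, h1p, hnotsp p₁ hp₁ hp₁0⟩
    · refine ⟨B r p₁ • p₂ - B r p₂ • p₁, ?_, ?_, ?_⟩
      · exact W.sub_mem (W.smul_mem _ hp₂) (W.smul_mem _ hp₁)
      · simp only [map_sub, map_smul, smul_eq_mul]
        ring
      · apply hnotsp _ (W.sub_mem (W.smul_mem _ hp₂) (W.smul_mem _ hp₁))
        intro h0
        rw [sub_eq_zero] at h0
        have := hind (- B r p₂) (B r p₁) (by rw [h0, neg_smul]; exact neg_add_cancel _)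
        exact h1p this.2

lemma exists_w (B : LinearMap.BilinForm F (Fin 5 → F))
    (hnd : ∀ v, (∀ w, B v w = 0) → v = 0)
    (v₁ v₂ : Fin 5 → F) (hv₁0 : v₁ ≠ 0) (hv₂0 : v₂ ≠ 0)
    (Q : Submodule F (Fin 5 → F)) (hQ : Module.finrank F Q = 2) :
    ∃ w, B v₁ w = 0 ∧ B v₂ w = 0 ∧ w ∉ Q := by
  have hker : ∀ v : Fin 5 → F, v ≠ 0 → Module.finrank F (LinearMap.ker (B v)) = 4 := by
    intro v hv
    have hrange : Module.finrank F (LinearMap.range (B v)) = 1 := by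
      have hle : Module.finrank F (LinearMap.range (B v)) ≤ 1 := by
        have := Submodule.finrank_le (LinearMap.range (B v))
        simpa [Module.finrank_self] using this
      have hne : LinearMap.range (B v) ≠ ⊥ := by
        intro h
        apply hv
        apply hnd
        intro w
        have : B v w ∈ LinearMap.range (B v) := LinearMap.mem_range_self _ w
        rw [h] at this
        simpa using this
      have hpos : Module.finrank F (LinearMap.range (B v)) ≠ 0 :=
        fun h => hne (Submodule.finrank_eq_zero.1 h)
      omega
    have := LinearMap.finrank_range_add_finrank_ker (B v)
    rw [hrange, Module.finrank_fin_fun] at this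
    omega
  have hint : 3 ≤ Module.finrank F (LinearMap.ker (B v₁) ⊓ LinearMap.ker (B v₂) :
      Submodule F (Fin 5 → F)) := by
    have hsum := Submodule.finrank_sup_add_finrank_inf_eq
      (LinearMap.ker (B v₁)) (LinearMap.ker (B v₂))
    have hsup := Submodule.finrank_le (LinearMap.ker (B v₁) ⊔ LinearMap.ker (B v₂))
    rw [hker v₁ hv₁0, hker v₂ hv₂0] at hsum
    rw [Module.finrank_fin_fun] at hsup
    omega
  by_contra h
  push_neg at h
  have hle : (LinearMap.ker (B v₁) ⊓ LinearMap.ker (B v₂) : Submodule F (Fin 5 → F)) ≤ Q := by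
    intro w hw
    simp only [Submodule.mem_inf, LinearMap.mem_ker] at hw
    exact h w hw.1 hw.2
  have := Submodule.finrank_mono (M := Fin 5 → F) hle
  rw [hQ] at this
  omega

/-- decompose a combination of v₁,v₂ in terms of v₁ and r = a•v₁+b•v₂. -/
lemma decomp (v₁ v₂ r : Fin 5 → F) (a b : F) (hb : b ≠ 0)
    (hr : r = a • v₁ + b • v₂) (c₁ c₂ : F) :
    ∃ β γ : F, c₁ • v₁ + c₂ • v₂ = β • v₁ + γ • r ∧
      (β = 0 → γ = 0 → c₁ = 0 ∧ c₂ = 0) ∧ (γ = 0 → c₂ = 0) := by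
  refine ⟨c₁ - c₂ * a * b⁻¹, c₂ * b⁻¹, ?_, ?_, ?_⟩
  · rw [hr]
    match_scalars
    · field_simp
      ring
    · field_simp
  · intro hβ hγ
    have hc₂ : c₂ = 0 := by
      have : c₂ * b⁻¹ * b = 0 := by rw [hγ, zero_mul]
      field_simp at this
      exact this
    constructor
    · have := hβ
      rw [hc₂] at this
      simpa using this
    · exact hc₂
  · intro hγ
    have : c₂ * b⁻¹ * b = 0 := by rw [hγ, zero_mul]
    field_simp at this
    exact this

end Helpers16
open Module Submodule

namespace Helpers16

variable {F : Type*} [Field F]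

lemma bL (B : LinearMap.BilinForm F (Fin 5 → F)) (x y z : Fin 5 → F) (c d : F) :
    B (c • x + d • y) z = c * B x z + d * B y z := by
  simp [map_add, map_smul, LinearMap.add_apply, LinearMap.smul_apply, smul_eq_mul]

lemma bR (B : LinearMap.BilinForm F (Fin 5 → F)) (x y z : Fin 5 → F) (c d : F) :
    B x (c • y + d • z) = c * B x y + d * B x z := by
  simp [map_add, map_smul, smul_eq_mul]

lemma bexp2 (B : LinearMap.BilinForm F (Fin 5 → F)) (x y : Fin 5 → F) (c : F) :
    B (x + c • y) (x + c • y) = B x x + c * B x y + c * B y x + c * c * B y y := by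
  simp [map_add, map_smul, LinearMap.add_apply, LinearMap.smul_apply, smul_eq_mul]
  ring

lemma bsmul (B : LinearMap.BilinForm F (Fin 5 → F)) (x y : Fin 5 → F) (c d : F) :
    B (c • x) (d • y) = c * d * B x y := by
  have h1 : B (c • x) = c • B x := LinearMap.map_smul B c x
  rw [h1, LinearMap.smul_apply, LinearMap.map_smul, smul_eq_mul, smul_eq_mul]
  ring

lemma mk_s (B : LinearMap.BilinForm F (Fin 5 → F))
    (hsymm : ∀ u v, B u v = B v u) (h2F : (2:F) ≠ 0)
    (v₁ v₂ r u₁ w : Fin 5 → F)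
    (huw : B u₁ w = 1) (hu₁u : B u₁ u₁ = 0)
    (hu₁1 : B v₁ u₁ = 0) (hu₁2 : B v₂ u₁ = 0) (hru₁ : B r u₁ = 0)
    (hw1 : B v₁ w = 0) (hw2 : B v₂ w = 0) (hrw : B r w = 0) :
    ∃ s' : Fin 5 → F, B u₁ s' = 1 ∧ B v₁ s' = 0 ∧ B v₂ s' = 0 ∧ B r s' = 0 ∧
      B s' s' = 0 := by
  refine ⟨w - (B w w / 2) • u₁, ?_, ?_, ?_, ?_, ?_⟩
  · simp only [map_sub, map_smul, smul_eq_mul, hu₁u, mul_zero, sub_zero, huw]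
  · simp only [map_sub, map_smul, smul_eq_mul, hu₁1, hw1, mul_zero, sub_zero]
  · simp only [map_sub, map_smul, smul_eq_mul, hu₁2, hw2, mul_zero, sub_zero]
  · simp only [map_sub, map_smul, smul_eq_mul, hru₁, hrw, mul_zero, sub_zero]
  · have hwu₁ : B w u₁ = 1 := by rw [hsymm]; exact huw
    simp only [map_sub, map_smul, LinearMap.sub_apply, LinearMap.smul_apply,
      smul_eq_mul, hu₁u, hwu₁, huw]
    have h2' : (2:F)⁻¹ * 2 = 1 := inv_mul_cancel₀ h2F
    linear_combination -(B w w) * h2'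

end Helpers16
namespace Stmt16

variable {F : Type*} [Field F]

/-- A singular point of the quadric Q(4,q) in PG(4,q). -/
def Singular (B : LinearMap.BilinForm F (Fin 5 → F))
    (p : Submodule F (Fin 5 → F)) : Prop :=
  Module.finrank F p = 1 ∧ ∀ v ∈ p, B v v = 0

/-- A hyperbolic point: off the quadric, whose polar solid meets Q(4,q) in a
hyperbolic quadric Q⁺(3,q). -/
def HyperPt (B : LinearMap.BilinForm F (Fin 5 → F))
    (p : Submodule F (Fin 5 → F)) : Prop :=
  Module.finrank F p = 1 ∧ (∀ v ∈ p, v ≠ 0 → B v v ≠ 0) ∧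
  ∃ W : Submodule F (Fin 5 → F), W ≤ B.orthogonal p ∧
    Module.finrank F W = 2 ∧ ∀ v ∈ W, B v v = 0

/-- The set of lines of the quadric lying in the polar solid of x; under the
Klein/duality correspondence these are exactly the points of W(q) belonging to
the element U of 𝒰_q corresponding to the hyperbolic point x. -/
def quadricLinesOn (B : LinearMap.BilinForm F (Fin 5 → F))
    (x : Submodule F (Fin 5 → F)) : Set (Submodule F (Fin 5 → F)) :=
  {W | Module.finrank F W = 2 ∧ W ≤ B.orthogonal x ∧ ∀ v ∈ W, B v v = 0}

end Stmt16

open Stmt16 in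
/-- for distinct U₁, U₂ ∈ 𝒰_q with corresponding hyperbolic points
x₁, x₂ of Q(4,q): U₁ and U₂ are not disjoint (i.e. the corresponding line sets on
the quadric meet) iff the line x₁x₂ is tangent to Q(4,q); and in that case
|U₁ ∩ U₂| = 2. -/
theorem stmt16 {F : Type*} [Field F] [Fintype F] (q : ℕ)
    (hq : Fintype.card F = q) (hodd : Odd q)
    (B : LinearMap.BilinForm F (Fin 5 → F))
    (hsymm : ∀ u v, B u v = B v u)
    (hnd : ∀ v, (∀ w, B v w = 0) → v = 0)
    (x₁ x₂ : Submodule F (Fin 5 → F)) (hne : x₁ ≠ x₂)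
    (h1 : HyperPt B x₁) (h2 : HyperPt B x₂) :
    ((quadricLinesOn B x₁ ∩ quadricLinesOn B x₂).Nonempty ↔
      {p | Singular B p ∧ p ≤ x₁ ⊔ x₂}.ncard = 1) ∧
    ((quadricLinesOn B x₁ ∩ quadricLinesOn B x₂).Nonempty →
      (quadricLinesOn B x₁ ∩ quadricLinesOn B x₂).ncard = 2) := by
  classical
  obtain ⟨v₁, hv₁0, hx₁⟩ := Helpers16.rank1_exists x₁ h1.1
  obtain ⟨v₂, hv₂0, hx₂⟩ := Helpers16.rank1_exists x₂ h2.1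
  have hv₁m : v₁ ∈ x₁ := by rw [hx₁]; exact Submodule.mem_span_singleton_self v₁
  have hv₂m : v₂ ∈ x₂ := by rw [hx₂]; exact Submodule.mem_span_singleton_self v₂
  have hB11 : B v₁ v₁ ≠ 0 := h1.2.1 v₁ hv₁m hv₁0
  have hB22 : B v₂ v₂ ≠ 0 := h2.2.1 v₂ hv₂m hv₂0
  have h2F : (2:F) ≠ 0 := Helpers16.two_ne_zero_of_odd_card q hq hodd
  have hind : ∀ s t : F, s • v₁ + t • v₂ = 0 → s = 0 ∧ t = 0 := by
    intro s t hst
    by_cases ht : t = 0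
    · subst ht; simp only [zero_smul, add_zero, smul_eq_zero] at hst
      exact ⟨hst.resolve_right hv₁0, rfl⟩
    · exfalso
      have hv : t • v₂ = -(s • v₁) := by rwa [add_comm, add_eq_zero_iff_eq_neg] at hst
      have hv2mem : v₂ ∈ span F {v₁} := by
        rw [Submodule.mem_span_singleton]
        refine ⟨-(s/t), ?_⟩
        have hts : t * -(s/t) = -s := by field_simp
        apply smul_right_injective (Fin 5 → F) ht
        show t • (-(s / t) • v₁) = t • v₂
        rw [hv, smul_smul, hts, neg_smul]
      apply hne
      obtain ⟨c, hc⟩ := Submodule.mem_span_singleton.1 hv2mem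
      have hc0 : c ≠ 0 := fun h0 => hv₂0 (by rw [← hc, h0, zero_smul])
      rw [hx₁, hx₂]
      apply le_antisymm
      · rw [Submodule.span_singleton_le_iff_mem, Submodule.mem_span_singleton]
        exact ⟨c⁻¹, by rw [← hc, smul_smul, inv_mul_cancel₀ hc0, one_smul]⟩
      · rw [Submodule.span_singleton_le_iff_mem, Submodule.mem_span_singleton]
        exact ⟨c, hc⟩
  have hL : x₁ ⊔ x₂ = span F {v₁, v₂} := by
    rw [hx₁, hx₂, ← Submodule.span_union, Set.singleton_union]
  -- ANY common line gives tangency data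
  have tangent_of : ∀ P ∈ quadricLinesOn B x₁ ∩ quadricLinesOn B x₂,
      ∃ (r : Fin 5 → F) (a b : F), r = a • v₁ + b • v₂ ∧ b ≠ 0 ∧ r ≠ 0 ∧
        B r v₁ = 0 ∧ B r v₂ = 0 ∧ B r r = 0 := by
    rintro P ⟨hQ1, hQ2⟩
    obtain ⟨hPrk, hPle1, hPts⟩ := hQ1
    obtain ⟨-, hPle2, -⟩ := hQ2
    have hPo1 : ∀ p ∈ P, B v₁ p = 0 := fun p hp => hPle1 hp v₁ hv₁m
    have hPo2 : ∀ p ∈ P, B v₂ p = 0 := fun p hp => hPle2 hp v₂ hv₂m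
    by_cases hex : ∃ c₁ c₂ : F, ¬(c₁ = 0 ∧ c₂ = 0) ∧
        B (c₁ • v₁ + c₂ • v₂) v₁ = 0 ∧ B (c₁ • v₁ + c₂ • v₂) v₂ = 0
    · obtain ⟨c₁, c₂, hc, e1, e2⟩ := hex
      refine ⟨c₁ • v₁ + c₂ • v₂, c₁, c₂, rfl, ?_, ?_, e1, e2, ?_⟩
      · intro h0
        apply hc
        subst h0
        rw [Helpers16.bL] at e1
        simp only [zero_mul, add_zero] at e1
        have h1' : c₁ = 0 := by
          rcases mul_eq_zero.1 e1 with h | h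
          · exact h
          · exact absurd h hB11
        exact ⟨h1', rfl⟩
      · intro h0
        exact hc (hind c₁ c₂ h0)
      · rw [Helpers16.bR B _ v₁ v₂ c₁ c₂, e1, e2]; ring
    · exfalso
      have hrad : ∀ c₁ c₂ : F, B (c₁ • v₁ + c₂ • v₂) v₁ = 0 →
          B (c₁ • v₁ + c₂ • v₂) v₂ = 0 → c₁ = 0 ∧ c₂ = 0 := by
        intro c₁ c₂ e1 e2
        by_contra hc
        exact hex ⟨c₁, c₂, hc, e1, e2⟩
      obtain ⟨p₁, p₂, hp₁, hp₂, hindp⟩ := Helpers16.rank2_exists P hPrk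
      have hp₁0 : p₁ ≠ 0 := fun h => one_ne_zero (hindp 1 0 (by simp [h])).1
      have hp₂0 : p₂ ≠ 0 := fun h => one_ne_zero (hindp 0 1 (by simp [h])).2
      have hcross := Helpers16.cross_zero B hsymm h2F P hPts
      have hq11 : B p₁ v₁ = 0 := by rw [hsymm]; exact hPo1 p₁ hp₁
      have hq12 : B p₁ v₂ = 0 := by rw [hsymm]; exact hPo2 p₁ hp₁
      have hq21 : B p₂ v₁ = 0 := by rw [hsymm]; exact hPo1 p₂ hp₂
      have hq22 : B p₂ v₂ = 0 := by rw [hsymm]; exact hPo2 p₂ hp₂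
      have hind4 : ∀ c₁ c₂ c₃ c₄ : F, c₁ • v₁ + c₂ • v₂ + c₃ • p₁ + c₄ • p₂ = 0 →
          c₁ = 0 ∧ c₂ = 0 ∧ c₃ = 0 ∧ c₄ = 0 := by
        intro c₁ c₂ c₃ c₄ hc
        have hu : c₁ • v₁ + c₂ • v₂ = -(c₃ • p₁ + c₄ • p₂) := by
          rw [eq_neg_iff_add_eq_zero, ← add_assoc]; exact hc
        have e1 : B (c₁ • v₁ + c₂ • v₂) v₁ = 0 := by
          rw [hu, map_neg, LinearMap.neg_apply, Helpers16.bL, hq11, hq21]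
          ring
        have e2 : B (c₁ • v₁ + c₂ • v₂) v₂ = 0 := by
          rw [hu, map_neg, LinearMap.neg_apply, Helpers16.bL, hq12, hq22]
          ring
        obtain ⟨hc₁, hc₂⟩ := hrad c₁ c₂ e1 e2
        have h34 : c₃ • p₁ + c₄ • p₂ = 0 := by
          have h' := hu
          rw [hc₁, hc₂] at h'
          simp only [zero_smul, add_zero] at h'
          rw [eq_comm, neg_eq_zero] at h'
          exact h'
        obtain ⟨hc₃, hc₄⟩ := hindp c₃ c₄ h34
        exact ⟨hc₁, hc₂, hc₃, hc₄⟩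
      obtain ⟨c, hc⟩ := Helpers16.keyA4 B hnd v₁ v₂ p₁ p₂ p₁ p₂ hind4
        hq11 hq12 (hPts p₁ hp₁) (hcross p₁ hp₁ p₂ hp₂)
        hq21 hq22 (hcross p₂ hp₂ p₁ hp₁) (hPts p₂ hp₂) hp₂0
      have := hindp 1 (-c) (by rw [hc]; module)
      exact one_ne_zero this.1
  -- tangency data determines the singular-point set on the line
  have sing_eq : ∀ (r : Fin 5 → F) (a b : F), r = a • v₁ + b • v₂ → b ≠ 0 → r ≠ 0 →
      B r v₁ = 0 → B r v₂ = 0 → B r r = 0 →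
      {p | Singular B p ∧ p ≤ x₁ ⊔ x₂} = {span F {r}} := by
    intro r a b hr hb hr0 hr1 hr2 hrr
    have h1r : B v₁ r = 0 := by rw [hsymm]; exact hr1
    apply Set.eq_singleton_iff_unique_mem.2
    constructor
    · refine ⟨⟨finrank_span_singleton hr0, ?_⟩, ?_⟩
      · intro v hv
        obtain ⟨c, rfl⟩ := Submodule.mem_span_singleton.1 hv
        rw [Helpers16.bsmul, hrr, mul_zero]
      · rw [hL, Submodule.span_singleton_le_iff_mem]
        exact Submodule.mem_span_pair.2 ⟨a, b, hr.symm⟩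
    · rintro p ⟨⟨hpfr, hpts⟩, hple⟩
      obtain ⟨u, hu0, rfl⟩ := Helpers16.rank1_exists p hpfr
      have hum : u ∈ span F {v₁, v₂} := by
        rw [← hL]; exact hple (Submodule.mem_span_singleton_self u)
      obtain ⟨c₁, c₂, hu⟩ := Submodule.mem_span_pair.1 hum
      obtain ⟨β, γ, hdec, hzz, hγ⟩ := Helpers16.decomp v₁ v₂ r a b hb hr c₁ c₂
      rw [hu] at hdec
      have hBuu : B u u = β * β * B v₁ v₁ := by
        rw [hdec, Helpers16.bL, Helpers16.bR, Helpers16.bR, h1r, hr1, hrr]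
        ring
      have hts := hpts u (Submodule.mem_span_singleton_self u)
      rw [hBuu] at hts
      have hβ : β = 0 := by
        rcases mul_eq_zero.1 hts with h | h
        · rcases mul_eq_zero.1 h with h' | h' <;> exact h'
        · exact absurd h hB11
      rw [hβ, zero_smul, zero_add] at hdec
      have hγ0 : γ ≠ 0 := fun h => hu0 (by rw [hdec, h, zero_smul])
      apply le_antisymm
      · rw [Submodule.span_singleton_le_iff_mem, Submodule.mem_span_singleton]
        exact ⟨γ, hdec.symm⟩
      · rw [Submodule.span_singleton_le_iff_mem, Submodule.mem_span_singleton]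
        exact ⟨γ⁻¹, by rw [hdec, smul_smul, inv_mul_cancel₀ hγ0, one_smul]⟩
  -- one singular point on the line gives tangency data
  have tangent_of_card : {p | Singular B p ∧ p ≤ x₁ ⊔ x₂}.ncard = 1 →
      ∃ (r : Fin 5 → F) (a b : F), r = a • v₁ + b • v₂ ∧ b ≠ 0 ∧ r ≠ 0 ∧
        B r v₁ = 0 ∧ B r v₂ = 0 ∧ B r r = 0 := by
    intro hone
    obtain ⟨p0, hp0⟩ := Set.ncard_eq_one.1 hone
    have hp0mem : p0 ∈ {p | Singular B p ∧ p ≤ x₁ ⊔ x₂} := by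
      rw [hp0]; exact Set.mem_singleton _
    obtain ⟨⟨hpfr, hpts⟩, hple⟩ := hp0mem
    obtain ⟨r, hr0, hp0r⟩ := Helpers16.rank1_exists p0 hpfr
    have hrp0 : r ∈ p0 := by rw [hp0r]; exact Submodule.mem_span_singleton_self r
    have hrm : r ∈ span F {v₁, v₂} := by rw [← hL]; exact hple hrp0
    obtain ⟨a, b, hab⟩ := Submodule.mem_span_pair.1 hrm
    have hrr : B r r = 0 := hpts r hrp0
    have hb : b ≠ 0 := by
      intro h0
      rw [h0, zero_smul, add_zero] at hab
      have ha0 : a ≠ 0 := fun h => hr0 (by rw [← hab, h, zero_smul])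
      have h' : B r r = a * (a * B v₁ v₁) := by
        rw [← hab, Helpers16.bsmul]; ring
      rw [hrr] at h'
      rcases mul_eq_zero.1 h'.symm with h | h
      · exact ha0 h
      · rcases mul_eq_zero.1 h with h'' | h''
        · exact ha0 h''
        · exact hB11 h''
    have hr1 : B r v₁ = 0 := by
      by_contra hBr1
      set t₀ : F := -(2 * B r v₁) / B v₁ v₁ with ht₀
      have ht₀0 : t₀ ≠ 0 := by
        apply div_ne_zero
        · simpa [neg_eq_zero] using mul_ne_zero h2F hBr1
        · exact hB11
      have hr'0 : r + t₀ • v₁ ≠ 0 := by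
        intro h0
        have hz : (a + t₀) • v₁ + b • v₂ = 0 := by
          rw [← h0, ← hab]; module
        exact hb (hind _ _ hz).2
      have hr'r' : B (r + t₀ • v₁) (r + t₀ • v₁) = 0 := by
        rw [Helpers16.bexp2, hrr, hsymm v₁ r]
        rw [ht₀]
        field_simp
        ring
      have hr'mem : span F {r + t₀ • v₁} ∈ {p | Singular B p ∧ p ≤ x₁ ⊔ x₂} := by
        refine ⟨⟨finrank_span_singleton hr'0, ?_⟩, ?_⟩
        · intro v hv
          obtain ⟨c, rfl⟩ := Submodule.mem_span_singleton.1 hv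
          rw [Helpers16.bsmul, hr'r', mul_zero]
        · rw [hL, Submodule.span_singleton_le_iff_mem]
          refine Submodule.mem_span_pair.2 ⟨a + t₀, b, ?_⟩
          rw [← hab]; module
      rw [hp0] at hr'mem
      have hspeq : span F {r + t₀ • v₁} = p0 := hr'mem
      have hmem2 : r + t₀ • v₁ ∈ span F {r} := by
        rw [← hp0r, ← hspeq]; exact Submodule.mem_span_singleton_self _
      obtain ⟨c, hc⟩ := Submodule.mem_span_singleton.1 hmem2
      have h3 : c • (a • v₁ + b • v₂) = (a • v₁ + b • v₂) + t₀ • v₁ := by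
        rw [hab]; exact hc
      have hzero : (c * a - a - t₀) • v₁ + (c * b - b) • v₂ = 0 := by
        have h4 : (c * a - a - t₀) • v₁ + (c * b - b) • v₂ =
            c • (a • v₁ + b • v₂) - ((a • v₁ + b • v₂) + t₀ • v₁) := by module
        rw [h4, h3, sub_self]
      obtain ⟨hz1, hz2⟩ := hind _ _ hzero
      have hc1 : c = 1 := by
        have : (c - 1) * b = 0 := by linear_combination hz2
        rcases mul_eq_zero.1 this with h | h
        · exact sub_eq_zero.1 h
        · exact absurd h hb
      apply ht₀0
      rw [hc1] at hz1
      linear_combination -hz1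
    have hr2 : B r v₂ = 0 := by
      have hexp := Helpers16.bR B r v₁ v₂ a b
      rw [hab] at hexp
      rw [hrr, hr1, mul_zero, zero_add] at hexp
      exact (mul_eq_zero.1 hexp.symm).resolve_left hb
    exact ⟨r, a, b, hab.symm, hb, hr0, hr1, hr2, hrr⟩
  -- tangency data + an isotropic partner gives a common line
  have nonempty_of : ∀ (r : Fin 5 → F) (a b : F), r = a • v₁ + b • v₂ → b ≠ 0 → r ≠ 0 →
      B r v₁ = 0 → B r v₂ = 0 → B r r = 0 →
      ∀ u : Fin 5 → F, B u u = 0 → B v₁ u = 0 → B v₂ u = 0 → B r u = 0 → u ∉ span F {r} →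
      span F {r, u} ∈ quadricLinesOn B x₁ ∩ quadricLinesOn B x₂ := by
    intro r a b hr hb hr0 hr1 hr2 hrr u huu hu1 hu2 hru husp
    have hindru := Helpers16.indep_of_not_mem_span r u hr0 husp
    have hfr : Module.finrank F (span F ({r, u} : Set (Fin 5 → F))) = 2 :=
      Helpers16.finrank_span2 r u hindru
    have hur : B u r = 0 := by rw [hsymm]; exact hru
    have hts : ∀ v ∈ span F ({r, u} : Set (Fin 5 → F)), B v v = 0 := by
      intro v hv
      obtain ⟨s, t, hst⟩ := Submodule.mem_span_pair.1 hv
      rw [← hst, Helpers16.bL, Helpers16.bR, Helpers16.bR, hrr, hru, hur, huu]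
      ring
    have hle : ∀ (x : Submodule F (Fin 5 → F)) (v : Fin 5 → F), x = span F {v} →
        B v r = 0 → B v u = 0 → span F ({r, u} : Set (Fin 5 → F)) ≤ B.orthogonal x := by
      intro x v hx hvr hvu p hp
      rw [LinearMap.BilinForm.mem_orthogonal_iff]
      intro n hn
      rw [hx] at hn
      obtain ⟨c, rfl⟩ := Submodule.mem_span_singleton.1 hn
      obtain ⟨s, t, hst⟩ := Submodule.mem_span_pair.1 hp
      show B (c • v) p = 0
      rw [map_smul, LinearMap.smul_apply, smul_eq_mul, ← hst, Helpers16.bR, hvr, hvu]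
      ring
    exact ⟨⟨hfr, hle x₁ v₁ hx₁ (by rw [hsymm]; exact hr1) hu1, hts⟩,
      ⟨hfr, hle x₂ v₂ hx₂ (by rw [hsymm]; exact hr2) hu2, hts⟩⟩
  obtain ⟨W, hWle, hWrk, hWts⟩ := h1.2.2
  have hW1 : ∀ w ∈ W, B v₁ w = 0 := fun w hw => hWle hw v₁ hv₁m
  refine ⟨⟨?_, ?_⟩, ?_⟩
  · intro hne'
    obtain ⟨P, hP⟩ := hne'
    obtain ⟨r, a, b, hr, hb, hr0, hr1, hr2, hrr⟩ := tangent_of P hP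
    rw [sing_eq r a b hr hb hr0 hr1 hr2 hrr]
    exact Set.ncard_singleton _
  · intro hone
    obtain ⟨r, a, b, hr, hb, hr0, hr1, hr2, hrr⟩ := tangent_of_card hone
    obtain ⟨u, huu, hu1, hu2, hru, husp⟩ :=
      Helpers16.exists_u1 B hsymm h2F v₁ v₂ r a b hb hr W hW1 hWrk hWts
    exact ⟨span F {r, u}, nonempty_of r a b hr hb hr0 hr1 hr2 hrr u huu hu1 hu2 hru husp⟩
  · intro hne'
    obtain ⟨P0, hP0⟩ := hne'
    obtain ⟨r, a, b, hr, hb, hr0, hr1, hr2, hrr⟩ := tangent_of P0 hP0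
    obtain ⟨u₁, hu₁u, hu₁1, hu₁2, hru₁, hu₁sp⟩ :=
      Helpers16.exists_u1 B hsymm h2F v₁ v₂ r a b hb hr W hW1 hWrk hWts
    -- symmetric facts for u₁
    have hu₁v₁ : B u₁ v₁ = 0 := by rw [hsymm]; exact hu₁1
    have hu₁v₂ : B u₁ v₂ = 0 := by rw [hsymm]; exact hu₁2
    have hu₁r : B u₁ r = 0 := by rw [hsymm]; exact hru₁
    have hindru := Helpers16.indep_of_not_mem_span r u₁ hr0 hu₁sp
    obtain ⟨w, hw1, hw2, hwQ⟩ := Helpers16.exists_w B hnd v₁ v₂ hv₁0 hv₂0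
      (span F {r, u₁}) (Helpers16.finrank_span2 r u₁ hindru)
    have hrw : B r w = 0 := by
      have hexp := Helpers16.bL B v₁ v₂ w a b
      rw [← hr] at hexp
      rw [hexp, hw1, hw2]; ring
    have hrof : ∀ p : Fin 5 → F, B v₁ p = 0 → B v₂ p = 0 → B r p = 0 := by
      intro p e1 e2
      have hexp := Helpers16.bL B v₁ v₂ p a b
      rw [← hr] at hexp
      rw [hexp, e1, e2]; ring
    have hbeta : ∀ c₁ c₂ : F, B (c₁ • v₁ + c₂ • v₂) v₁ = 0 →
        ∃ γ : F, c₁ • v₁ + c₂ • v₂ = γ • r ∧ (γ = 0 → c₁ = 0 ∧ c₂ = 0) := by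
      intro c₁ c₂ e1
      obtain ⟨β, γ, hdec, hzz, hγ⟩ := Helpers16.decomp v₁ v₂ r a b hb hr c₁ c₂
      have hβ : β = 0 := by
        have h' : B (β • v₁ + γ • r) v₁ = 0 := by rw [← hdec]; exact e1
        rw [Helpers16.bL, hr1] at h'
        have h'' : β * B v₁ v₁ = 0 := by linear_combination h'
        exact (mul_eq_zero.1 h'').resolve_right hB11
      rw [hβ, zero_smul, zero_add] at hdec
      exact ⟨γ, hdec, fun hγ0 => hzz hβ hγ0⟩
    have hu1w : B u₁ w ≠ 0 := by
      intro h0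
      have hind4 : ∀ c₁ c₂ c₃ c₄ : F, c₁ • v₁ + c₂ • v₂ + c₃ • u₁ + c₄ • w = 0 →
          c₁ = 0 ∧ c₂ = 0 ∧ c₃ = 0 ∧ c₄ = 0 := by
        intro c₁ c₂ c₃ c₄ hc
        have hu : c₁ • v₁ + c₂ • v₂ = -(c₃ • u₁ + c₄ • w) := by
          rw [eq_neg_iff_add_eq_zero, ← add_assoc]; exact hc
        have e1 : B (c₁ • v₁ + c₂ • v₂) v₁ = 0 := by
          rw [hu, map_neg, LinearMap.neg_apply, Helpers16.bL, hu₁v₁,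
            (by rw [hsymm]; exact hw1 : B w v₁ = 0)]
          ring
        obtain ⟨γ, hdec, hzz⟩ := hbeta c₁ c₂ e1
        have hc' : γ • r + c₃ • u₁ + c₄ • w = 0 := by
          rw [← hdec]; exact hc
        have hc₄ : c₄ = 0 := by
          by_contra h4
          apply hwQ
          rw [Submodule.mem_span_pair]
          refine ⟨-(γ/c₄), -(c₃/c₄), ?_⟩
          apply smul_right_injective (Fin 5 → F) h4
          show c₄ • (-(γ/c₄) • r + -(c₃/c₄) • u₁) = c₄ • w
          have h5 : c₄ • w = -(γ • r + c₃ • u₁) := by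
            rw [eq_neg_iff_add_eq_zero, add_comm]; exact hc'
          rw [h5, smul_add, smul_smul, smul_smul]
          have e₁ : c₄ * -(γ/c₄) = -γ := by field_simp
          have e₂ : c₄ * -(c₃/c₄) = -c₃ := by field_simp
          rw [e₁, e₂]
          module
        rw [hc₄, zero_smul, add_zero] at hc'
        obtain ⟨hγ', hc₃⟩ := hindru γ c₃ hc'
        obtain ⟨hc₁, hc₂⟩ := hzz hγ'
        exact ⟨hc₁, hc₂, hc₃, hc₄⟩
      obtain ⟨c, hcraw⟩ := Helpers16.keyA4 B hnd v₁ v₂ u₁ w u₁ r hind4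
        hu₁v₁ hu₁v₂ hu₁u h0 hr1 hr2 hru₁ hrw hr0
      exact hu₁sp (Submodule.mem_span_singleton.2 ⟨c, hcraw.symm⟩)
    -- construct the second isotropic partner s'
    obtain ⟨s', hu₁s', hs'1, hs'2, hrs', hs's'⟩ :
        ∃ s' : Fin 5 → F, B u₁ s' = 1 ∧ B v₁ s' = 0 ∧ B v₂ s' = 0 ∧ B r s' = 0 ∧
          B s' s' = 0 :=
      Helpers16.mk_s B hsymm h2F v₁ v₂ r u₁ ((B u₁ w)⁻¹ • w)
        (by rw [map_smul, smul_eq_mul]; exact inv_mul_cancel₀ hu1w)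
        hu₁u hu₁1 hu₁2 hru₁
        (by rw [map_smul, smul_eq_mul, hw1, mul_zero])
        (by rw [map_smul, smul_eq_mul, hw2, mul_zero])
        (by rw [map_smul, smul_eq_mul, hrw, mul_zero])
    have hs'u₁ : B s' u₁ = 1 := by rw [hsymm]; exact hu₁s'
    have hs'v₁ : B s' v₁ = 0 := by rw [hsymm]; exact hs'1
    have hs'v₂ : B s' v₂ = 0 := by rw [hsymm]; exact hs'2
    have hs'r : B s' r = 0 := by rw [hsymm]; exact hrs'
    have hs'sp : s' ∉ span F {r} := by
      intro hmem
      obtain ⟨c, hc⟩ := Submodule.mem_span_singleton.1 hmem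
      have h' : B u₁ s' = c * B u₁ r := by rw [← hc, map_smul, smul_eq_mul]
      rw [hu₁s', hu₁r, mul_zero] at h'
      exact one_ne_zero h'
    have hindrs := Helpers16.indep_of_not_mem_span r s' hr0 hs'sp
    have hP₁mem := nonempty_of r a b hr hb hr0 hr1 hr2 hrr u₁ hu₁u hu₁1 hu₁2 hru₁ hu₁sp
    have hP₂mem := nonempty_of r a b hr hb hr0 hr1 hr2 hrr s' hs's' hs'1 hs'2 hrs' hs'sp
    have hP₁P₂ : span F ({r, u₁} : Set (Fin 5 → F)) ≠ span F ({r, s'} : Set (Fin 5 → F)) := by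
      intro heq
      have hs'P₁ : s' ∈ span F ({r, u₁} : Set (Fin 5 → F)) := by
        rw [heq]
        exact Submodule.subset_span (by simp)
      obtain ⟨s, t, hst⟩ := Submodule.mem_span_pair.1 hs'P₁
      have h' : B u₁ s' = s * B u₁ r + t * B u₁ u₁ := by rw [← hst, Helpers16.bR]
      rw [hu₁s', hu₁r, hu₁u] at h'
      simp at h'
    have hSeq : quadricLinesOn B x₁ ∩ quadricLinesOn B x₂ =
        {span F ({r, u₁} : Set (Fin 5 → F)), span F ({r, s'} : Set (Fin 5 → F))} := by
      ext P
      constructor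
      · rintro ⟨hQ1, hQ2⟩
        obtain ⟨hPrk, hPle1, hPts⟩ := hQ1
        obtain ⟨-, hPle2, -⟩ := hQ2
        have hPo1 : ∀ p ∈ P, B v₁ p = 0 := fun p hp => hPle1 hp v₁ hv₁m
        have hPo2 : ∀ p ∈ P, B v₂ p = 0 := fun p hp => hPle2 hp v₂ hv₂m
        have hcross := Helpers16.cross_zero B hsymm h2F P hPts
        have hPor : ∀ p ∈ P, B r p = 0 := fun p hp => hrof p (hPo1 p hp) (hPo2 p hp)
        -- step 1 : r ∈ P
        have hrP : r ∈ P := by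
          by_contra hrP
          obtain ⟨p₁, p₂, hp₁, hp₂, hindp⟩ := Helpers16.rank2_exists P hPrk
          have hp₁0 : p₁ ≠ 0 := fun h => one_ne_zero (hindp 1 0 (by simp [h])).1
          have hind4 : ∀ c₁ c₂ c₃ c₄ : F, c₁ • v₁ + c₂ • v₂ + c₃ • p₁ + c₄ • p₂ = 0 →
              c₁ = 0 ∧ c₂ = 0 ∧ c₃ = 0 ∧ c₄ = 0 := by
            intro c₁ c₂ c₃ c₄ hc
            have hu : c₁ • v₁ + c₂ • v₂ = -(c₃ • p₁ + c₄ • p₂) := by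
              rw [eq_neg_iff_add_eq_zero, ← add_assoc]; exact hc
            have e1 : B (c₁ • v₁ + c₂ • v₂) v₁ = 0 := by
              rw [hu, map_neg, LinearMap.neg_apply, Helpers16.bL,
                (by rw [hsymm]; exact hPo1 p₁ hp₁ : B p₁ v₁ = 0),
                (by rw [hsymm]; exact hPo1 p₂ hp₂ : B p₂ v₁ = 0)]
              ring
            obtain ⟨γ, hdec, hzz⟩ := hbeta c₁ c₂ e1
            have hγ0 : γ = 0 := by
              by_contra hγne
              apply hrP
              have hmem : γ • r ∈ P := by
                rw [← hdec, hu]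
                exact P.neg_mem (P.add_mem (P.smul_mem _ hp₁) (P.smul_mem _ hp₂))
              have hmem2 := P.smul_mem γ⁻¹ hmem
              rwa [smul_smul, inv_mul_cancel₀ hγne, one_smul] at hmem2
            obtain ⟨hc₁, hc₂⟩ := hzz hγ0
            have h34 : c₃ • p₁ + c₄ • p₂ = 0 := by
              have h' := hu
              rw [hc₁, hc₂] at h'
              simp only [zero_smul, add_zero] at h'
              rw [eq_comm, neg_eq_zero] at h'
              exact h'
            obtain ⟨hc₃, hc₄⟩ := hindp c₃ c₄ h34
            exact ⟨hc₁, hc₂, hc₃, hc₄⟩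
          obtain ⟨c, hcraw⟩ := Helpers16.keyA4 B hnd v₁ v₂ p₁ p₂ p₁ r hind4
            (by rw [hsymm]; exact hPo1 p₁ hp₁) (by rw [hsymm]; exact hPo2 p₁ hp₁)
            (hPts p₁ hp₁) (hcross p₁ hp₁ p₂ hp₂)
            hr1 hr2 (hPor p₁ hp₁) (hPor p₂ hp₂) hr0
          have hc0 : c ≠ 0 := fun h => hp₁0 (by rw [hcraw, h, zero_smul])
          apply hrP
          rw [show r = c⁻¹ • p₁ by rw [hcraw, smul_smul, inv_mul_cancel₀ hc0, one_smul]]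
          exact P.smul_mem _ hp₁
        -- step 2 : pick u ∈ P outside span {r}
        obtain ⟨u, huP, husp⟩ : ∃ u, u ∈ P ∧ u ∉ span F {r} := by
          by_contra h; push_neg at h
          have hle : P ≤ span F {r} := fun x hx => h x hx
          have hm := Submodule.finrank_mono (M := Fin 5 → F) hle
          rw [hPrk, finrank_span_singleton hr0] at hm
          omega
        have huv₁ : B u v₁ = 0 := by rw [hsymm]; exact hPo1 u huP
        have huv₂ : B u v₂ = 0 := by rw [hsymm]; exact hPo2 u huP
        have hind4' : ∀ c₁ c₂ c₃ c₄ : F, c₁ • v₁ + c₂ • v₂ + c₃ • u₁ + c₄ • s' = 0 →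
            c₁ = 0 ∧ c₂ = 0 ∧ c₃ = 0 ∧ c₄ = 0 := by
          intro c₁ c₂ c₃ c₄ hc
          have h4 := congrArg (B u₁) hc
          simp only [map_add, map_smul, smul_eq_mul, map_zero,
            hu₁v₁, hu₁v₂, hu₁u, hu₁s', mul_zero, mul_one, add_zero, zero_add] at h4
          have h5 := congrArg (B s') hc
          simp only [map_add, map_smul, smul_eq_mul, map_zero,
            hs'v₁, hs'v₂, hs'u₁, hs's', mul_zero, mul_one, add_zero, zero_add] at h5
          rw [h4, h5, zero_smul, zero_smul, add_zero, add_zero] at hc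
          obtain ⟨hc₁, hc₂⟩ := hind c₁ c₂ hc
          exact ⟨hc₁, hc₂, h5, h4⟩
        set α : F := B s' u with hαdef
        set β : F := B u₁ u with hβdef
        have hy'1 : B (u - α • u₁ - β • s') v₁ = 0 := by
          simp only [map_sub, LinearMap.sub_apply, map_smul, LinearMap.smul_apply,
            smul_eq_mul, huv₁, hu₁v₁, hs'v₁]
          ring
        have hy'2 : B (u - α • u₁ - β • s') v₂ = 0 := by
          simp only [map_sub, LinearMap.sub_apply, map_smul, LinearMap.smul_apply,
            smul_eq_mul, huv₂, hu₁v₂, hs'v₂]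
          ring
        have hy'3 : B (u - α • u₁ - β • s') u₁ = 0 := by
          simp only [map_sub, LinearMap.sub_apply, map_smul, LinearMap.smul_apply,
            smul_eq_mul, hu₁u, hs'u₁]
          rw [hsymm u u₁, ← hβdef]
          ring
        have hy'4 : B (u - α • u₁ - β • s') s' = 0 := by
          simp only [map_sub, LinearMap.sub_apply, map_smul, LinearMap.smul_apply,
            smul_eq_mul, hu₁s', hs's']
          rw [hsymm u s', ← hαdef]
          ring
        obtain ⟨c, hcy⟩ := Helpers16.keyA4 B hnd v₁ v₂ u₁ s'
          (u - α • u₁ - β • s') r hind4'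
          hy'1 hy'2 hy'3 hy'4 hr1 hr2 hru₁ hrs' hr0
        have hu_eq : u = c • r + α • u₁ + β • s' := by
          have h7 : u = c • r + (α • u₁ + β • s') := by
            rw [← hcy]; module
          exact h7.trans (add_assoc _ _ _).symm
        have hαβ : α * β = 0 := by
          have h8 : B u u = 0 := hPts u huP
          have h9 : B u u = 2 * (α * β) := by
            conv_lhs => rw [hu_eq]
            simp only [map_add, map_smul, LinearMap.add_apply, LinearMap.smul_apply,
              smul_eq_mul, hrr, hru₁, hrs', hu₁r, hu₁u, hu₁s', hs'r, hs'u₁, hs's']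
            ring
          have h10 : 2 * (α * β) = 0 := by rw [← h9, h8]
          exact (mul_eq_zero.1 h10).resolve_left h2F
        rcases mul_eq_zero.1 hαβ with hα0 | hβ0
        · -- α = 0 : P = span {r, s'}
          right
          have hβne : β ≠ 0 := by
            intro h
            apply husp
            rw [Submodule.mem_span_singleton]
            exact ⟨c, by rw [hu_eq, hα0, h, zero_smul, zero_smul, add_zero, add_zero]⟩
          have hs'P : s' ∈ P := by
            have he : β • s' = u - c • r := by
              rw [hu_eq, hα0]; module
            have hm : β • s' ∈ P := by
              rw [he]; exact P.sub_mem huP (P.smul_mem _ hrP)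
            have hm2 := P.smul_mem β⁻¹ hm
            rwa [smul_smul, inv_mul_cancel₀ hβne, one_smul] at hm2
          have hle2 : span F ({r, s'} : Set (Fin 5 → F)) ≤ P := by
            rw [Submodule.span_le]
            intro y hy
            simp only [Set.mem_insert_iff, Set.mem_singleton_iff] at hy
            rcases hy with rfl | rfl
            · exact hrP
            · exact hs'P
          exact (Submodule.eq_of_le_of_finrank_le hle2
            (le_of_eq (by rw [hPrk, Helpers16.finrank_span2 r s' hindrs]))).symm
        · -- β = 0 : P = span {r, u₁}
          left
          have hαne : α ≠ 0 := by
            intro h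
            apply husp
            rw [Submodule.mem_span_singleton]
            exact ⟨c, by rw [hu_eq, hβ0, h, zero_smul, zero_smul, add_zero, add_zero]⟩
          have hu₁P : u₁ ∈ P := by
            have he : α • u₁ = u - c • r := by
              rw [hu_eq, hβ0]; module
            have hm : α • u₁ ∈ P := by
              rw [he]; exact P.sub_mem huP (P.smul_mem _ hrP)
            have hm2 := P.smul_mem α⁻¹ hm
            rwa [smul_smul, inv_mul_cancel₀ hαne, one_smul] at hm2
          have hle2 : span F ({r, u₁} : Set (Fin 5 → F)) ≤ P := by
            rw [Submodule.span_le]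
            intro y hy
            simp only [Set.mem_insert_iff, Set.mem_singleton_iff] at hy
            rcases hy with rfl | rfl
            · exact hrP
            · exact hu₁P
          exact (Submodule.eq_of_le_of_finrank_le hle2
            (le_of_eq (by rw [hPrk, Helpers16.finrank_span2 r u₁ hindru]))).symm
      · intro hP
        simp only [Set.mem_insert_iff, Set.mem_singleton_iff] at hP
        rcases hP with rfl | rfl
        · exact hP₁mem
        · exact hP₂mem
    rw [hSeq]
    exact Set.ncard_pair hP₁P₂
end
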